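/- Let K be a nondegenerate triangle in ℝ². Then the sum of the three principal 2×2 minors of the local Raviart–Thomas mass matrix, namely R = Σ_{i=1}^{3} [ (G_K)_{ii} (G_K)_{i+1,i+1} − ((G_K)_{i,i+1})² ] with indices taken cyclically modulo 3, equals 1/12 + (9/4)·(ρ_K²/|K|)². -/

import Mathlib

open MeasureTheory Real RealInnerProductSpace

/-!
The affine map `τ(s, t) = W₀ + s (W₁ - W₀) + t (W₂ - W₀)` carries the standard triangle
`T = {s, t ≥ 0, s + t ≤ 1}` bijectively onto `K` (barycentric coordinates invert it), with constant
Jacobian `D = det (W₁ - W₀, W₂ - W₀)`. Hence `|K| = |D| / 2`, and `∫_K ⟪x - τ p, x - τ q⟫` is `|D|`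
times an explicit quadratic moment of `T`, computed by Fubini. In terms of the Gram entries
`P, Q, R` of the edge vectors this yields every entry of `G_K` and `ρ_K² = (P + R - Q) / 18`, and the
claim becomes a polynomial identity in `P, Q, R` modulo Lagrange's identity `D² = P R - Q²`.
-/

theorem integral_cubic (c₀ c₁ c₂ c₃ u : ℝ) :
    ∫ s in (0 : ℝ)..u, (c₀ + c₁ * s + c₂ * s ^ 2 + c₃ * s ^ 3) =
      c₀ * u + c₁ * u ^ 2 / 2 + c₂ * u ^ 3 / 3 + c₃ * u ^ 4 / 4 := by
  have hderiv (s : ℝ) := ((((hasDerivAt_id s).const_mul c₀).add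
    ((hasDerivAt_pow 2 s).const_mul (c₁ / 2))).add ((hasDerivAt_pow 3 s).const_mul (c₂ / 3))).add
    ((hasDerivAt_pow 4 s).const_mul (c₃ / 4))
  rw [intervalIntegral.integral_eq_sub_of_hasDerivAt
    (fun s _ => (hderiv s).congr_deriv (by simp; ring))
    (Continuous.intervalIntegrable (by fun_prop) _ _)]
  simp
  ring

def stdTriangle : Set (ℝ × ℝ) := {z | 0 ≤ z.1 ∧ 0 ≤ z.2 ∧ z.1 + z.2 ≤ 1}

theorem mk_mem_stdTriangle_iff {s t : ℝ} :
    (s, t) ∈ stdTriangle ↔ s ∈ Set.Icc 0 1 ∧ t ∈ Set.Icc 0 (1 - s) := by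
  simp only [stdTriangle, Set.mem_ofPred_eq, Set.mem_Icc]
  constructor
  · rintro ⟨hs, ht, hst⟩
    exact ⟨⟨hs, by linarith⟩, ht, by linarith⟩
  · rintro ⟨⟨hs, -⟩, ht, hst⟩
    exact ⟨hs, ht, by linarith⟩

theorem isClosed_stdTriangle : IsClosed stdTriangle :=
  (isClosed_le continuous_const continuous_fst).inter
    ((isClosed_le continuous_const continuous_snd).inter
      (isClosed_le (continuous_fst.add continuous_snd) continuous_const))

theorem isCompact_stdTriangle : IsCompact stdTriangle := by
  refine (isCompact_Icc (a := ((0 : ℝ), (0 : ℝ))) (b := (1, 1))).of_isClosed_subset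
    isClosed_stdTriangle fun z hz => ?_
  obtain ⟨⟨hs, hs'⟩, ht, ht'⟩ := mk_mem_stdTriangle_iff.mp hz
  exact ⟨⟨hs, ht⟩, hs', by dsimp; linarith⟩

theorem setIntegral_stdTriangle_eq_intervalIntegral {f : ℝ × ℝ → ℝ} (hf : Continuous f) :
    ∫ z in stdTriangle, f z = ∫ s in (0 : ℝ)..1, ∫ t in (0 : ℝ)..(1 - s), f (s, t) := by
  have hint : Integrable (stdTriangle.indicator f) (volume.prod volume) := by
    rw [integrable_indicator_iff isClosed_stdTriangle.measurableSet, ← Measure.volume_eq_prod]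
    exact hf.continuousOn.integrableOn_compact isCompact_stdTriangle
  rw [← integral_indicator isClosed_stdTriangle.measurableSet, Measure.volume_eq_prod,
    integral_prod _ hint, intervalIntegral.integral_of_le zero_le_one,
    ← integral_Icc_eq_integral_Ioc, ← integral_indicator measurableSet_Icc]
  congr 1 with s
  by_cases hs : s ∈ Set.Icc (0 : ℝ) 1
  · rw [Set.indicator_of_mem hs, intervalIntegral.integral_of_le (by linarith [hs.2]),
      ← integral_Icc_eq_integral_Ioc, ← integral_indicator measurableSet_Icc]
    congr 1 with t
    by_cases ht : t ∈ Set.Icc 0 (1 - s)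
    · rw [Set.indicator_of_mem ht, Set.indicator_of_mem (mk_mem_stdTriangle_iff.mpr ⟨hs, ht⟩)]
    · rw [Set.indicator_of_notMem ht,
        Set.indicator_of_notMem fun h => ht (mk_mem_stdTriangle_iff.mp h).2]
  · simp [mk_mem_stdTriangle_iff, hs]

theorem integral_quadratic_stdTriangle (a b c d e f : ℝ) :
    ∫ z in stdTriangle, (a + b * z.1 + c * z.2 + d * z.1 ^ 2 + e * z.2 ^ 2 + f * (z.1 * z.2)) =
      a / 2 + (b + c) / 6 + (d + e) / 12 + f / 24 := by
  have hinner (s : ℝ) :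
      ∫ t in (0 : ℝ)..(1 - s), (a + b * s + c * t + d * s ^ 2 + e * t ^ 2 + f * (s * t)) =
        (a + c / 2 + e / 3) + (b - a + f / 2 - c - e) * s + (d - b + c / 2 - f + e) * s ^ 2 +
          (f / 2 - d - e / 3) * s ^ 3 := by
    calc _ = ∫ t in (0 : ℝ)..(1 - s),
          ((a + b * s + d * s ^ 2) + (c + f * s) * t + e * t ^ 2 + 0 * t ^ 3) := by
          congr 1 with t; ring
      _ = _ := by rw [integral_cubic]; ring
  rw [setIntegral_stdTriangle_eq_intervalIntegral (by fun_prop)]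
  simp_rw [hinner, integral_cubic]
  ring

noncomputable def stdTriangleMoment (P Q R : ℝ) (p q : ℝ × ℝ) : ℝ :=
  ∫ z in stdTriangle, (P * ((z.1 - p.1) * (z.1 - q.1)) +
    Q * ((z.1 - p.1) * (z.2 - q.2) + (z.1 - q.1) * (z.2 - p.2)) + R * ((z.2 - p.2) * (z.2 - q.2)))

theorem stdTriangleMoment_eq (P Q R : ℝ) (p q : ℝ × ℝ) :
    stdTriangleMoment P Q R p q =
      P * (p.1 * q.1 / 2 - (p.1 + q.1) / 6 + 1 / 12) +
        Q * ((p.1 * q.2 + q.1 * p.2) / 2 - (p.1 + q.1 + p.2 + q.2) / 6 + 1 / 12) +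
          R * (p.2 * q.2 / 2 - (p.2 + q.2) / 6 + 1 / 12) := by
  calc _ = ∫ z in stdTriangle, ((P * p.1 * q.1 + Q * (p.1 * q.2 + q.1 * p.2) + R * p.2 * q.2) +
        (-P * (p.1 + q.1) - Q * (p.2 + q.2)) * z.1 + (-Q * (p.1 + q.1) - R * (p.2 + q.2)) * z.2 +
        P * z.1 ^ 2 + R * z.2 ^ 2 + 2 * Q * (z.1 * z.2)) := by
        rw [stdTriangleMoment]; congr 1 with z; ring
    _ = _ := by rw [integral_quadratic_stdTriangle]; ring

def stdTriangleVertex : Fin 3 → ℝ × ℝ := ![(0, 0), (1, 0), (0, 1)]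

noncomputable def planeEquiv : EuclideanSpace ℝ (Fin 2) ≃ᵐ ℝ × ℝ :=
  (MeasurableEquiv.toLp 2 (Fin 2 → ℝ)).symm.trans MeasurableEquiv.finTwoArrow

@[simp]
theorem planeEquiv_apply (x : EuclideanSpace ℝ (Fin 2)) : planeEquiv x = (x 0, x 1) := rfl

theorem measurePreserving_planeEquiv : MeasurePreserving planeEquiv :=
  (volume_preserving_finTwoArrow ℝ).comp
    (EuclideanSpace.volume_preserving_symm_measurableEquiv_toLp (Fin 2))

theorem inner_smul_add_smul {F : Type*} [NormedAddCommGroup F] [InnerProductSpace ℝ F]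
    (u v : F) (s t s' t' : ℝ) :
    ⟪s • u + t • v, s' • u + t' • v⟫ =
      s * s' * ⟪u, u⟫ + (s * t' + s' * t) * ⟪u, v⟫ + t * t' * ⟪v, v⟫ := by
  simp only [inner_add_left, inner_add_right, real_inner_smul_left, real_inner_smul_right,
    real_inner_comm u v]
  ring

theorem sq_cross_eq_inner_mul_inner_sub_sq (u v : EuclideanSpace ℝ (Fin 2)) :
    (u 0 * v 1 - u 1 * v 0) ^ 2 = ⟪u, u⟫ * ⟪v, v⟫ - ⟪u, v⟫ ^ 2 := by
  simp only [PiLp.inner_apply, Fin.sum_univ_two, RCLike.inner_apply, conj_trivial]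
  ring

section Triangle

variable (W : Fin 3 → EuclideanSpace ℝ (Fin 2))

def triangleParam (z : ℝ × ℝ) : EuclideanSpace ℝ (Fin 2) :=
  W 0 + z.1 • (W 1 - W 0) + z.2 • (W 2 - W 0)

theorem triangleParam_stdTriangleVertex (i : Fin 3) :
    triangleParam W (stdTriangleVertex i) = W i := by
  fin_cases i <;> simp [triangleParam, stdTriangleVertex]

theorem triangleParam_sub_triangleParam (z p : ℝ × ℝ) :
    triangleParam W z - triangleParam W p =
      (z.1 - p.1) • (W 1 - W 0) + (z.2 - p.2) • (W 2 - W 0) := by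
  simp only [triangleParam]
  module

theorem triangleParam_eq_affineCombination (z : ℝ × ℝ) :
    triangleParam W z = Finset.univ.affineCombination ℝ W ![1 - z.1 - z.2, z.1, z.2] := by
  rw [Finset.affineCombination_eq_linear_combination _ _ _
    (by simp [Fin.sum_univ_three]; ring)]
  simp only [triangleParam, Fin.sum_univ_three, Matrix.cons_val_zero, Matrix.cons_val_one,
    Matrix.cons_val_two, Matrix.head_cons, Matrix.tail_cons]
  module

noncomputable def edgeMap : EuclideanSpace ℝ (Fin 2) →L[ℝ] EuclideanSpace ℝ (Fin 2) :=
  (EuclideanSpace.proj 0).smulRight (W 1 - W 0) + (EuclideanSpace.proj 1).smulRight (W 2 - W 0)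

theorem triangleParam_comp_planeEquiv :
    triangleParam W ∘ planeEquiv = fun x => W 0 + edgeMap W x := by
  ext1 x
  simp [triangleParam, edgeMap, add_assoc]

theorem det_edgeMap :
    (edgeMap W).det = (W 1 - W 0) 0 * (W 2 - W 0) 1 - (W 1 - W 0) 1 * (W 2 - W 0) 0 := by
  rw [ContinuousLinearMap.det,
    ← LinearMap.det_toMatrix (EuclideanSpace.basisFun (Fin 2) ℝ).toBasis, Matrix.det_fin_two]
  simp [LinearMap.toMatrix_apply, edgeMap]
  ring

variable {W}

def triangleBasis (hW : AffineIndependent ℝ W) : AffineBasis (Fin 3) ℝ (EuclideanSpace ℝ (Fin 2)) :=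
  ⟨W, hW, hW.affineSpan_eq_top_iff_card_eq_finrank_add_one.mpr (by simp)⟩

theorem coord_triangleBasis_triangleParam (hW : AffineIndependent ℝ W) (i : Fin 3) (z : ℝ × ℝ) :
    (triangleBasis hW).coord i (triangleParam W z) = ![1 - z.1 - z.2, z.1, z.2] i := by
  rw [triangleParam_eq_affineCombination]
  exact (triangleBasis hW).coord_apply_combination_of_mem (Finset.mem_univ i)
    (by simp [Fin.sum_univ_three]; ring)

theorem triangleParam_injective (hW : AffineIndependent ℝ W) :
    Function.Injective (triangleParam W) := by
  intro z z' h
  have h₁ := congrArg ((triangleBasis hW).coord 1) h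
  have h₂ := congrArg ((triangleBasis hW).coord 2) h
  simp only [coord_triangleBasis_triangleParam] at h₁ h₂
  exact Prod.ext h₁ h₂

theorem triangleParam_surjective (hW : AffineIndependent ℝ W) :
    Function.Surjective (triangleParam W) := by
  intro x
  refine ⟨((triangleBasis hW).coord 1 x, (triangleBasis hW).coord 2 x), ?_⟩
  have hsum := (triangleBasis hW).sum_coord_apply_eq_one x
  rw [Fin.sum_univ_three] at hsum
  conv_rhs => rw [← (triangleBasis hW).affineCombination_coord_eq_self x]
  rw [triangleParam_eq_affineCombination]
  congr 1
  ext i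
  fin_cases i <;> simp
  linarith

theorem convexHull_eq_image_triangleParam (hW : AffineIndependent ℝ W) :
    convexHull ℝ (Set.range W) = triangleParam W '' stdTriangle := by
  ext x
  obtain ⟨z, rfl⟩ := triangleParam_surjective hW x
  rw [(triangleParam_injective hW).mem_set_image]
  change _ ∈ convexHull ℝ (Set.range (triangleBasis hW)) ↔ _
  simp only [(triangleBasis hW).convexHull_eq_nonneg_coord, Set.mem_ofPred_eq,
    Fin.forall_fin_succ, coord_triangleBasis_triangleParam]
  simp [stdTriangle, le_sub_iff_add_le']
  tauto

theorem det_edgeMap_ne_zero (hW : AffineIndependent ℝ W) : (edgeMap W).det ≠ 0 := by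
  have hinj : Function.Injective (edgeMap W) := fun x y h =>
    (triangleParam_injective hW).comp planeEquiv.injective <| by
      simp only [triangleParam_comp_planeEquiv, h]
  exact (LinearMap.isUnit_iff_isUnit_det _).mp
    ((LinearMap.isUnit_iff_ker_eq_bot _).mpr (LinearMap.ker_eq_bot.mpr hinj)) |>.ne_zero

theorem setIntegral_convexHull_eq (hW : AffineIndependent ℝ W)
    (g : EuclideanSpace ℝ (Fin 2) → ℝ) :
    ∫ x in convexHull ℝ (Set.range W), g x =
      |(edgeMap W).det| * ∫ z in stdTriangle, g (triangleParam W z) := by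
  have himage : convexHull ℝ (Set.range W) =
      (fun x => W 0 + edgeMap W x) '' (planeEquiv ⁻¹' stdTriangle) := by
    rw [convexHull_eq_image_triangleParam hW, ← triangleParam_comp_planeEquiv, Set.image_comp,
      Set.image_preimage_eq _ planeEquiv.surjective]
  have hderiv (x) (_ : x ∈ planeEquiv ⁻¹' stdTriangle) :
      HasFDerivWithinAt (fun x => W 0 + edgeMap W x) (edgeMap W) (planeEquiv ⁻¹' stdTriangle) x :=
    ((edgeMap W).hasFDerivAt.const_add (W 0)).hasFDerivWithinAt
  have hinj : Set.InjOn (fun x => W 0 + edgeMap W x) (planeEquiv ⁻¹' stdTriangle) := by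
    rw [← triangleParam_comp_planeEquiv]
    exact ((triangleParam_injective hW).comp planeEquiv.injective).injOn
  rw [himage, integral_image_eq_integral_abs_det_fderiv_smul volume
    (planeEquiv.measurable isClosed_stdTriangle.measurableSet) hderiv hinj]
  simp_rw [smul_eq_mul]
  rw [integral_const_mul, ← measurePreserving_planeEquiv.setIntegral_preimage_emb
    planeEquiv.measurableEmbedding]
  congr 2 with x
  rw [← Function.comp_apply (f := triangleParam W), triangleParam_comp_planeEquiv]

theorem toReal_volume_convexHull (hW : AffineIndependent ℝ W) :
    (volume (convexHull ℝ (Set.range W))).toReal = |(edgeMap W).det| / 2 := by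
  have hT : ∫ _ in stdTriangle, (1 : ℝ) = 1 / 2 := by
    simpa using integral_quadratic_stdTriangle 1 0 0 0 0 0
  rw [← measureReal_def]
  simpa [hT, div_eq_mul_inv] using setIntegral_convexHull_eq hW fun _ => 1

theorem integral_inner_sub_sub_convexHull (hW : AffineIndependent ℝ W) (p q : ℝ × ℝ) :
    ∫ x in convexHull ℝ (Set.range W), ⟪x - triangleParam W p, x - triangleParam W q⟫ =
      |(edgeMap W).det| * stdTriangleMoment ⟪W 1 - W 0, W 1 - W 0⟫ ⟪W 1 - W 0, W 2 - W 0⟫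
        ⟪W 2 - W 0, W 2 - W 0⟫ p q := by
  rw [setIntegral_convexHull_eq hW, stdTriangleMoment]
  congr 2 with z
  rw [triangleParam_sub_triangleParam, triangleParam_sub_triangleParam, inner_smul_add_smul]
  ring

end Triangle

/-- For a nondegenerate triangle `K` in `ℝ²`, the sum of the three principal
`2×2` minors of the local Raviart–Thomas mass matrix `G_K` equals
`1/12 + (9/4)·(ρ_K²/|K|)²`. -/
theorem stmt_7
    (W : Fin 3 → EuclideanSpace ℝ (Fin 2)) (hW : AffineIndependent ℝ W)
    (K : Set (EuclideanSpace ℝ (Fin 2))) (hK : K = convexHull ℝ (Set.range W))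
    (A : ℝ) (hA : A = (volume K).toReal)
    (G : EuclideanSpace ℝ (Fin 2)) (hG : G = (3 : ℝ)⁻¹ • (W 0 + W 1 + W 2))
    (ρsq : ℝ) (hρ : ρsq = (1 / A) * ∫ x in K, ‖x - G‖ ^ 2)
    (φ : Fin 3 → EuclideanSpace ℝ (Fin 2) → EuclideanSpace ℝ (Fin 2))
    (hφ : ∀ i x, φ i x = (2 * A)⁻¹ • (x - W i))
    (GK : Matrix (Fin 3) (Fin 3) ℝ)
    (hGK : ∀ i j : Fin 3, GK i j = ∫ x in K, ⟪φ i x, φ j x⟫) :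
    (∑ i : Fin 3, (GK i i * GK (i + 1) (i + 1) - GK i (i + 1) ^ 2)) =
      1 / 12 + (9 / 4) * (ρsq / A) ^ 2 := by
  subst hK
  set D := |(edgeMap W).det|
  set P := ⟪W 1 - W 0, W 1 - W 0⟫
  set Q := ⟪W 1 - W 0, W 2 - W 0⟫
  set R := ⟪W 2 - W 0, W 2 - W 0⟫
  have hA' : A = D / 2 := hA.trans (toReal_volume_convexHull hW)
  have hD : D ≠ 0 := abs_ne_zero.mpr (det_edgeMap_ne_zero hW)
  have hgram : D ^ 2 = P * R - Q ^ 2 := by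
    rw [sq_abs, det_edgeMap, sq_cross_eq_inner_mul_inner_sub_sq]
  have hGK' (i j : Fin 3) :
      GK i j = stdTriangleMoment P Q R (stdTriangleVertex i) (stdTriangleVertex j) / D := by
    simp_rw [hGK, hφ, real_inner_smul_left, real_inner_smul_right]
    rw [integral_const_mul, integral_const_mul, ← triangleParam_stdTriangleVertex W i,
      ← triangleParam_stdTriangleVertex W j, integral_inner_sub_sub_convexHull hW, hA']
    field_simp
    rfl
  have hρ' : ρsq = 2 * stdTriangleMoment P Q R (3⁻¹, 3⁻¹) (3⁻¹, 3⁻¹) := by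
    have hG' : G = triangleParam W (3⁻¹, 3⁻¹) := by rw [hG, triangleParam]; module
    simp_rw [hρ, hG', ← real_inner_self_eq_norm_sq]
    rw [integral_inner_sub_sub_convexHull hW, hA']
    field_simp
    rfl
  simp only [Fin.sum_univ_three, Fin.reduceAdd, hGK', hρ', hA', stdTriangleMoment_eq,
    stdTriangleVertex, Matrix.cons_val]
  field_simp
  rw [hgram]
  ring
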